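/- arXiv:1910.11385 — 5 statements merged into one kernel-verified Lean document; each statement's English description precedes it below -/
import Mathlib

section
/- Let H be a reproducing kernel Hilbert space of functions f : Δ^m → ℝ^m with matrix-valued kernel k : Δ^m × Δ^m → ℝ^{m×m}. Then for all t ∈ Δ^m, the operator norm of the map u ↦ k(·,t)u from (ℝ^m, ‖·‖_p) to H equals ‖k(t,t)‖_{p;p'}^{1/2}, where p' is the Hölder conjugate of p and ‖·‖_{p;p'} denotes the induced operator norm from ℓ^p to ℓ^{p'}. -/
open MeasureTheory
open scoped ENNReal

/-- The `ℓ^p` norm on `ℝ^m`, including `p = ∞`. -/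
noncomputable def lpnorm {m : ℕ} (p : ℝ≥0∞) (x : Fin m → ℝ) : ℝ :=
  ‖(WithLp.equiv p (Fin m → ℝ)).symm x‖

/-- The operator norm of a matrix `A : ℝ^m → ℝ^m` from `ℓ^p` to `ℓ^q`,
`‖A‖_{p;q} = sup_{x ≠ 0} ‖Ax‖_q / ‖x‖_p`. -/
noncomputable def matOpNorm {m : ℕ} (p q : ℝ≥0∞) (A : Matrix (Fin m) (Fin m) ℝ) : ℝ :=
  sSup {c : ℝ | ∃ x : Fin m → ℝ, x ≠ 0 ∧ c = lpnorm q (A.mulVec x) / lpnorm p x}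

/-!
View `u ↦ k(·,t)u` as an operator `T : ℓ^p → H` and `k(t,t)` as an operator `A : ℓ^p → ℓ^{p'}`.
The reproducing property says `∑ yᵢ (A x)ᵢ = ⟪T y, T x⟫`, i.e. `A = T* T` through the
`ℓ^p`–`ℓ^{p'}` pairing. By Hölder's inequality and its equality case this pairing computes the
`ℓ^{p'}` norm, so Cauchy–Schwarz gives the C*-identity `‖A‖ = ‖T‖²`, and both suprema in the
statement are these operator norms.
-/

theorem abs_coe_sign_le_one (a : ℝ) : |(SignType.sign a : ℝ)| ≤ 1 := by
  rcases lt_trichotomy a 0 with h | h | h <;> simp [h]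

namespace PiLp

variable {ι : Type*} [Fintype ι]

theorem sum_mul_le_norm_one_mul_norm_top (x : WithLp 1 (ι → ℝ)) (y : WithLp ∞ (ι → ℝ)) :
    ∑ i, x i * y i ≤ ‖x‖ * ‖y‖ := by
  rw [norm_eq_of_L1, Finset.sum_mul]
  refine Finset.sum_le_sum fun i _ => ?_
  calc x i * y i ≤ |x i| * |y i| := (le_abs_self _).trans (abs_mul _ _).le
    _ ≤ ‖x i‖ * ‖y‖ := by gcongr; exacts [le_rfl, norm_apply_le y i]

theorem norm_top_le_of_forall_sum_mul_le {y : WithLp ∞ (ι → ℝ)} {c : ℝ} (hc : 0 ≤ c)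
    (h : ∀ x : WithLp 1 (ι → ℝ), ∑ i, x i * y i ≤ c * ‖x‖) : ‖y‖ ≤ c := by
  classical
  rw [norm_eq_ciSup]
  refine Real.iSup_le (fun i => ?_) hc
  have hi := h (single 1 i (SignType.sign (y i) : ℝ))
  rw [norm_single, ofLp_single, Fintype.sum_eq_single i fun j hj => by simp [hj],
    Pi.single_eq_same, sign_mul_self] at hi
  calc ‖y i‖ = |y i| := Real.norm_eq_abs _
    _ ≤ c * ‖(SignType.sign (y i) : ℝ)‖ := hi
    _ ≤ c := mul_le_of_le_one_right hc (abs_coe_sign_le_one _)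

theorem norm_one_le_of_forall_sum_mul_le {y : WithLp 1 (ι → ℝ)} {c : ℝ} (hc : 0 ≤ c)
    (h : ∀ x : WithLp ∞ (ι → ℝ), ∑ i, x i * y i ≤ c * ‖x‖) : ‖y‖ ≤ c := by
  set x := WithLp.toLp ∞ (fun i => (SignType.sign (y i) : ℝ))
  have hx : ‖x‖ ≤ 1 := by
    rw [norm_toLp]
    exact pi_norm_le_iff_of_nonneg zero_le_one |>.2 fun i => abs_coe_sign_le_one _
  calc ‖y‖ = ∑ i, x i * y i := by simp [x, norm_eq_of_L1]
    _ ≤ c * ‖x‖ := h x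
    _ ≤ c := mul_le_of_le_one_right hc hx

variable {p q : ℝ≥0∞} [p.HolderConjugate q]

theorem sum_mul_le_norm_mul_norm (x : WithLp p (ι → ℝ)) (y : WithLp q (ι → ℝ)) :
    ∑ i, x i * y i ≤ ‖x‖ * ‖y‖ := by
  rcases eq_or_ne q ∞ with rfl | hq
  · obtain rfl : p = 1 := (ENNReal.HolderConjugate.eq_top_iff_eq_one ∞ p).1 rfl
    exact sum_mul_le_norm_one_mul_norm_top x y
  rcases eq_or_ne p ∞ with rfl | hp
  · obtain rfl : q = 1 := (ENNReal.HolderConjugate.eq_top_iff_eq_one ∞ q).1 rfl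
    simpa only [mul_comm] using sum_mul_le_norm_one_mul_norm_top y x
  have hpq := ENNReal.HolderConjugate.toReal_of_ne_top hp hq
  rw [norm_eq_sum hpq.pos, norm_eq_sum hpq.symm.pos]
  simpa only [Real.norm_eq_abs] using Real.inner_le_Lp_mul_Lq Finset.univ x y hpq

theorem norm_le_of_forall_sum_mul_le_of_ne_top (hp : p ≠ ∞) (hq : q ≠ ∞)
    {y : WithLp q (ι → ℝ)} {c : ℝ} (hc : 0 ≤ c)
    (h : ∀ x : WithLp p (ι → ℝ), ∑ i, x i * y i ≤ c * ‖x‖) : ‖y‖ ≤ c := by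
  have hpq := ENNReal.HolderConjugate.toReal_of_ne_top hp hq
  set s := p.toReal
  set r := q.toReal
  set S := ∑ i, |y i| ^ r
  have hS : 0 ≤ S := by positivity
  -- the equality case of Hölder's inequality
  set x := WithLp.toLp p (fun i => (SignType.sign (y i) : ℝ) * |y i| ^ (r - 1))
  have hxy : ∑ i, x i * y i = S := by
    refine Finset.sum_congr rfl fun i _ => ?_
    rw [WithLp.ofLp_toLp, mul_right_comm, sign_mul_self, mul_comm,
      ← Real.rpow_add_one' (abs_nonneg _) (by linarith [hpq.symm.lt]), sub_add_cancel]
  have hx : ‖x‖ ≤ S ^ (1 / s) := by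
    rw [norm_eq_sum hpq.pos]
    refine Real.rpow_le_rpow (by positivity) (Finset.sum_le_sum fun i _ => ?_) (by positivity)
    calc ‖x i‖ ^ s ≤ (|y i| ^ (r - 1)) ^ s := by
          rw [WithLp.ofLp_toLp, Real.norm_eq_abs, abs_mul,
            Real.abs_rpow_of_nonneg (abs_nonneg _), abs_abs]
          gcongr
          exact mul_le_of_le_one_left (by positivity) (abs_coe_sign_le_one _)
      _ = |y i| ^ r := by rw [← Real.rpow_mul (abs_nonneg _), hpq.symm.sub_one_mul_conj]
  have hy : ‖y‖ = S ^ (1 / r) := by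
    simp only [norm_eq_sum hpq.symm.pos, Real.norm_eq_abs, S, r]
  rw [hy]
  rcases hS.eq_or_lt with hS0 | hS0
  · rw [← hS0, Real.zero_rpow (by simpa using hpq.symm.pos.ne')]
    exact hc
  have hsplit : S = S ^ (1 / s) * S ^ (1 / r) := by
    rw [← Real.rpow_add hS0, one_div, one_div, hpq.inv_add_inv_eq_one, Real.rpow_one]
  refine le_of_mul_le_mul_left ?_ (Real.rpow_pos_of_pos hS0 (1 / s))
  calc S ^ (1 / s) * S ^ (1 / r) = ∑ i, x i * y i := by rw [hxy, ← hsplit]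
    _ ≤ c * ‖x‖ := h x
    _ ≤ S ^ (1 / s) * c := by rw [mul_comm]; gcongr

theorem norm_le_of_forall_sum_mul_le {y : WithLp q (ι → ℝ)} {c : ℝ} (hc : 0 ≤ c)
    (h : ∀ x : WithLp p (ι → ℝ), ∑ i, x i * y i ≤ c * ‖x‖) : ‖y‖ ≤ c := by
  rcases eq_or_ne q ∞ with rfl | hq
  · obtain rfl : p = 1 := (ENNReal.HolderConjugate.eq_top_iff_eq_one ∞ p).1 rfl
    exact norm_top_le_of_forall_sum_mul_le hc h
  rcases eq_or_ne p ∞ with rfl | hp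
  · obtain rfl : q = 1 := (ENNReal.HolderConjugate.eq_top_iff_eq_one ∞ q).1 rfl
    exact norm_one_le_of_forall_sum_mul_le hc h
  exact norm_le_of_forall_sum_mul_le_of_ne_top hp hq hc h

end PiLp

namespace ContinuousLinearMap

variable {E F : Type*} [NormedAddCommGroup E] [NormedSpace ℝ E]
  [NormedAddCommGroup F] [NormedSpace ℝ F]

theorem sSup_norm_div_norm_eq_norm (f : E →L[ℝ] F) :
    sSup {c : ℝ | ∃ u : E, u ≠ 0 ∧ c = ‖f u‖ / ‖u‖} = ‖f‖ := by
  rw [← f.sSup_sphere_eq_norm]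
  congr 1
  ext c
  constructor
  · rintro ⟨u, hu, rfl⟩
    refine ⟨‖u‖⁻¹ • u, by simp [norm_smul, hu], ?_⟩
    simp [norm_smul, div_eq_inv_mul]
  · rintro ⟨u, hu, rfl⟩
    have hu1 : ‖u‖ = 1 := by simpa using hu
    exact ⟨u, norm_ne_zero_iff.1 (by simp [hu1]), by simp [hu1]⟩

variable {H : Type*} [NormedAddCommGroup H] [InnerProductSpace ℝ H]

theorem norm_eq_norm_sq_of_pairing_eq_inner (B : E → F → ℝ)
    (hB : ∀ y v, B y v ≤ ‖y‖ * ‖v‖)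
    (hB_norming : ∀ v c, 0 ≤ c → (∀ y, B y v ≤ c * ‖y‖) → ‖v‖ ≤ c)
    (T : E →L[ℝ] H) (A : E →L[ℝ] F) (hTA : ∀ x y, B y (A x) = inner ℝ (T y) (T x)) :
    ‖A‖ = ‖T‖ ^ 2 := by
  refine le_antisymm (A.opNorm_le_bound (by positivity) fun x => ?_) ?_
  · refine hB_norming _ _ (by positivity) fun y => ?_
    calc B y (A x) = inner ℝ (T y) (T x) := hTA x y
      _ ≤ ‖T y‖ * ‖T x‖ := real_inner_le_norm _ _
      _ ≤ (‖T‖ * ‖y‖) * (‖T‖ * ‖x‖) := by gcongr <;> exact T.le_opNorm _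
      _ = ‖T‖ ^ 2 * ‖x‖ * ‖y‖ := by ring
  · have hT : ‖T‖ ≤ √‖A‖ := T.opNorm_le_bound (by positivity) fun x => by
      rw [← Real.sqrt_sq (norm_nonneg (T x)), ← Real.sqrt_sq (norm_nonneg x),
        ← Real.sqrt_mul (norm_nonneg _)]
      refine Real.sqrt_le_sqrt ?_
      calc ‖T x‖ ^ 2 = B x (A x) := by rw [hTA, real_inner_self_eq_norm_sq]
        _ ≤ ‖x‖ * ‖A x‖ := hB _ _
        _ ≤ ‖x‖ * (‖A‖ * ‖x‖) := by gcongr; exact A.le_opNorm x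
        _ = ‖A‖ * ‖x‖ ^ 2 := by ring
    calc ‖T‖ ^ 2 ≤ √‖A‖ ^ 2 := by gcongr
      _ = ‖A‖ := Real.sq_sqrt (norm_nonneg _)

end ContinuousLinearMap

/-- `ev` realizes elements of `H` as functions, `K t u` is `k(·,t)u ∈ H`, and `hrep` is the
reproducing property `⟨u, f(t)⟩ = ⟨k(·,t)u, f⟩_H`. -/
theorem rkhs_kernel_column_norm_general {m : ℕ} {H : Type*}
    [NormedAddCommGroup H] [InnerProductSpace ℝ H]
    (ev : H →ₗ[ℝ] (stdSimplex ℝ (Fin m) → Fin m → ℝ))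
    (k : stdSimplex ℝ (Fin m) → stdSimplex ℝ (Fin m) → Matrix (Fin m) (Fin m) ℝ)
    (K : stdSimplex ℝ (Fin m) → (Fin m → ℝ) →ₗ[ℝ] H)
    (hK : ∀ t u s, ev (K t u) s = (k s t).mulVec u)
    (hrep : ∀ (t : stdSimplex ℝ (Fin m)) (u : Fin m → ℝ) (f : H),
      ∑ i, u i * ev f t i = (inner ℝ (K t u) f : ℝ))
    (p p' : ℝ≥0∞) (hp : 1 ≤ p) (hp' : 1 ≤ p') (hconj : 1 / p + 1 / p' = 1)
    (t : stdSimplex ℝ (Fin m)) :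
    sSup {c : ℝ | ∃ u : Fin m → ℝ, u ≠ 0 ∧ c = ‖K t u‖ / lpnorm p u}
      = Real.sqrt (matOpNorm p p' (k t t)) := by
  have : Fact (1 ≤ p) := ⟨hp⟩
  have : Fact (1 ≤ p') := ⟨hp'⟩
  have : p.HolderConjugate p' := ENNReal.holderConjugate_iff.2 (by simpa only [one_div] using hconj)
  let T : WithLp p (Fin m → ℝ) →L[ℝ] H :=
    ((K t).comp (WithLp.linearEquiv p ℝ (Fin m → ℝ)).toLinearMap).toContinuousLinearMap
  let A : WithLp p (Fin m → ℝ) →L[ℝ] WithLp p' (Fin m → ℝ) :=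
    (Matrix.toLpLin p p' (k t t)).toContinuousLinearMap
  have hTA : ∀ x y, ∑ i, y i * A x i = inner ℝ (T y) (T x) := fun x y => by
    simpa [T, A, hK] using hrep t y (T x)
  have hAT : ‖A‖ = ‖T‖ ^ 2 :=
    ContinuousLinearMap.norm_eq_norm_sq_of_pairing_eq_inner _ PiLp.sum_mul_le_norm_mul_norm
      (fun _ _ hc => PiLp.norm_le_of_forall_sum_mul_le hc) T A hTA
  have hT : sSup {c : ℝ | ∃ u : Fin m → ℝ, u ≠ 0 ∧ c = ‖K t u‖ / lpnorm p u} = ‖T‖ := by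
    rw [← T.sSup_norm_div_norm_eq_norm]
    congr 1; ext c
    exact (WithLp.equiv p _).symm.exists_congr_left.trans (by simp [T, lpnorm])
  have hA : matOpNorm p p' (k t t) = ‖A‖ := by
    rw [matOpNorm, ← A.sSup_norm_div_norm_eq_norm]
    congr 1; ext c
    exact (WithLp.equiv p _).symm.exists_congr_left.trans
      (by simp [A, lpnorm, Matrix.toLpLin_apply])
  rw [hT, hA, hAT, Real.sqrt_sq (norm_nonneg _)]

/-- Let `H` be an RKHS of functions `f : Δ^m → ℝ^m` with matrix-valued
kernel `k`.  (`ev` realizes elements of `H` as functions, `K t u = k(·,t)u ∈ H`, and `hrep`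
is the reproducing property `⟨u, f(t)⟩ = ⟨k(·,t)u, f⟩_H`.)  Then for every `t ∈ Δ^m`, the
operator norm of `u ↦ k(·,t)u` from `(ℝ^m, ‖·‖_p)` to `H` equals `‖k(t,t)‖_{p;p'}^{1/2}`,
where `p'` is the Hölder conjugate of `p`. -/
theorem rkhs_kernel_column_norm {m : ℕ} {H : Type*}
    [NormedAddCommGroup H] [InnerProductSpace ℝ H] [CompleteSpace H]
    (ev : H →ₗ[ℝ] (stdSimplex ℝ (Fin m) → Fin m → ℝ))
    (hinj : Function.Injective ev)
    (k : stdSimplex ℝ (Fin m) → stdSimplex ℝ (Fin m) → Matrix (Fin m) (Fin m) ℝ)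
    (K : stdSimplex ℝ (Fin m) → (Fin m → ℝ) →ₗ[ℝ] H)
    (hK : ∀ t u s, ev (K t u) s = (k s t).mulVec u)
    (hrep : ∀ (t : stdSimplex ℝ (Fin m)) (u : Fin m → ℝ) (f : H),
      ∑ i, u i * ev f t i = (inner ℝ (K t u) f : ℝ))
    (p p' : ℝ≥0∞) (hp : 1 ≤ p) (hp' : 1 ≤ p') (hconj : 1 / p + 1 / p' = 1)
    (t : stdSimplex ℝ (Fin m)) :
    sSup {c : ℝ | ∃ u : Fin m → ℝ, u ≠ 0 ∧ c = ‖K t u‖ / lpnorm p u}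
      = Real.sqrt (matOpNorm p p' (k t t)) :=
  rkhs_kernel_column_norm_general ev k K hK hrep p p' hp hp' hconj t
end

section
/- Let H be a vector-valued RKHS on Δ^m with matrix-valued kernel k. Then for all s, t ∈ Δ^m and 1 ≤ p, q ≤ ∞, ‖k(s,t)‖_{p;q} ≤ ‖k(s,s)‖_{q';q}^{1/2} · ‖k(t,t)‖_{p;p'}^{1/2}, where p' and q' are the Hölder conjugates of p and q. -/
open MeasureTheory
open scoped ENNReal

/-!
Write `v = k(s,t) x` and pick `y` with `‖y‖_{q'} ≤ 1` that norms `v` in `ℓ^q`. The reproducing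
property and Cauchy–Schwarz give `‖v‖_q = ⟪y, v⟫ = ⟪K_s y, K_t x⟫ ≤ ‖K_s y‖ ‖K_t x‖`, and each
factor is bounded on the diagonal by Hölder:
`‖K_t x‖² = ⟪x, k(t,t) x⟫ ≤ ‖x‖_p ‖k(t,t) x‖_{p'} ≤ ‖k(t,t)‖_{p;p'} ‖x‖_p²`, and likewise
`‖K_s y‖² ≤ ‖k(s,s)‖_{q';q}`.
-/

open scoped Matrix

theorem abs_sign_le_one {α : Type*} [Ring α] [LinearOrder α] [IsStrictOrderedRing α] (x : α) :
    |(SignType.sign x : α)| ≤ 1 := by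
  rcases SignType.sign x with _ | _ | _ <;> simp

section Lp

variable {ι : Type*} [Fintype ι]

theorem dotProduct_le_norm_mul_sum_abs (x y : ι → ℝ) : x ⬝ᵥ y ≤ ‖x‖ * ∑ i, |y i| := by
  rw [dotProduct, Finset.mul_sum]
  refine Finset.sum_le_sum fun i _ => ?_
  calc x i * y i ≤ |x i| * |y i| := by rw [← abs_mul]; exact le_abs_self _
    _ ≤ ‖x‖ * |y i| := by gcongr; exact norm_le_pi_norm x i

theorem dotProduct_le_norm_toLp_mul_norm_toLp {a b : ℝ≥0∞} [a.HolderConjugate b] (x y : ι → ℝ) :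
    x ⬝ᵥ y ≤ ‖WithLp.toLp a x‖ * ‖WithLp.toLp b y‖ := by
  have := Fact.mk (ENNReal.HolderConjugate.one_le a b)
  have := Fact.mk (ENNReal.HolderConjugate.one_le b a)
  rcases eq_or_ne a ∞ with rfl | ha
  · obtain rfl : b = 1 := (ENNReal.HolderConjugate.eq_top_iff_eq_one ∞ b).mp rfl
    simpa [PiLp.norm_eq_of_L1] using dotProduct_le_norm_mul_sum_abs x y
  rcases eq_or_ne b ∞ with rfl | hb
  · obtain rfl : a = 1 := (ENNReal.HolderConjugate.eq_top_iff_eq_one ∞ a).mp rfl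
    simpa [PiLp.norm_eq_of_L1, dotProduct_comm, mul_comm] using dotProduct_le_norm_mul_sum_abs y x
  have hab := ENNReal.HolderConjugate.toReal_of_ne_top ha hb
  simpa [dotProduct, PiLp.norm_eq_sum hab.pos, PiLp.norm_eq_sum hab.symm.pos] using
    Real.inner_le_Lp_mul_Lq Finset.univ x y hab

theorem exists_norm_le_one_dotProduct_eq_sum_abs (x : ι → ℝ) :
    ∃ y : ι → ℝ, ‖y‖ ≤ 1 ∧ y ⬝ᵥ x = ∑ i, |x i| :=
  ⟨fun i => SignType.sign (x i),
    (pi_norm_le_iff_of_nonneg zero_le_one).mpr fun i => abs_sign_le_one _, by simp [dotProduct]⟩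

theorem exists_sum_abs_le_one_dotProduct_eq_norm (x : ι → ℝ) :
    ∃ y : ι → ℝ, ∑ i, |y i| ≤ 1 ∧ y ⬝ᵥ x = ‖x‖ := by
  cases isEmpty_or_nonempty ι
  · exact ⟨0, by simp, by simp [Subsingleton.elim x 0]⟩
  classical
  obtain ⟨i₀, hi₀⟩ := Finite.exists_max fun i => |x i|
  have hnorm : ‖x‖ = |x i₀| :=
    le_antisymm ((pi_norm_le_iff_of_nonneg (abs_nonneg _)).mpr hi₀) (norm_le_pi_norm x i₀)
  refine ⟨Pi.single i₀ (SignType.sign (x i₀)), ?_, ?_⟩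
  · simpa [Pi.single_apply, apply_ite] using abs_sign_le_one (x i₀)
  · simp [hnorm]

theorem exists_norm_toLp_le_one_dotProduct_eq_norm_toLp {a b : ℝ≥0∞} [a.HolderConjugate b]
    (x : ι → ℝ) :
    ∃ y : ι → ℝ, ‖WithLp.toLp b y‖ ≤ 1 ∧ y ⬝ᵥ x = ‖WithLp.toLp a x‖ := by
  have := Fact.mk (ENNReal.HolderConjugate.one_le a b)
  have := Fact.mk (ENNReal.HolderConjugate.one_le b a)
  rcases eq_or_ne a ∞ with rfl | ha
  · obtain rfl : b = 1 := (ENNReal.HolderConjugate.eq_top_iff_eq_one ∞ b).mp rfl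
    simpa [PiLp.norm_eq_of_L1] using exists_sum_abs_le_one_dotProduct_eq_norm x
  rcases eq_or_ne b ∞ with rfl | hb
  · obtain rfl : a = 1 := (ENNReal.HolderConjugate.eq_top_iff_eq_one ∞ a).mp rfl
    simpa [PiLp.norm_eq_of_L1] using exists_norm_le_one_dotProduct_eq_sum_abs x
  have hab := ENNReal.HolderConjugate.toReal_of_ne_top ha hb
  obtain ⟨⟨g, hg, hgx⟩, -⟩ := NNReal.isGreatest_Lp Finset.univ (fun i => ‖x i‖₊) hab
  refine ⟨fun i => SignType.sign (x i) * g i, ?_, ?_⟩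
  · have hyg (i : ι) : ‖(SignType.sign (x i) * g i : ℝ)‖₊ ≤ g i := by
      rw [nnnorm_mul, NNReal.nnnorm_eq]
      refine mul_le_of_le_one_left (g i).2 ?_
      simpa [← NNReal.coe_le_one] using abs_sign_le_one (x i)
    rw [← coe_nnnorm, NNReal.coe_le_one, PiLp.nnnorm_eq_sum hb]
    refine NNReal.rpow_le_one (le_trans ?_ hg) (by positivity)
    gcongr with i
    exact hyg i
  · calc _ = ∑ i, |x i| * g i :=
          Finset.sum_congr rfl fun i _ => by rw [mul_right_comm, sign_mul_self]
      _ = ‖WithLp.toLp a x‖ := by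
          rw [← coe_nnnorm, PiLp.nnnorm_eq_sum ha, ← hgx]
          push_cast
          rfl

end Lp

section MatOpNorm

variable {m : ℕ} {p q : ℝ≥0∞}

theorem lpnorm_nonneg [Fact (1 ≤ p)] (x : Fin m → ℝ) : 0 ≤ lpnorm p x := norm_nonneg _

theorem lpnorm_pos [Fact (1 ≤ p)] {x : Fin m → ℝ} (hx : x ≠ 0) : 0 < lpnorm p x := by
  simpa [lpnorm] using hx

theorem matOpNorm_nonneg [Fact (1 ≤ p)] [Fact (1 ≤ q)] (A : Matrix (Fin m) (Fin m) ℝ) :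
    0 ≤ matOpNorm p q A :=
  Real.sSup_nonneg <| by
    rintro _ ⟨x, -, rfl⟩
    exact div_nonneg (lpnorm_nonneg _) (lpnorm_nonneg _)

theorem matOpNorm_le_of_lpnorm_mulVec_le [Fact (1 ≤ p)] {A : Matrix (Fin m) (Fin m) ℝ} {C : ℝ}
    (hC : 0 ≤ C) (h : ∀ x, lpnorm q (A *ᵥ x) ≤ C * lpnorm p x) : matOpNorm p q A ≤ C :=
  Real.sSup_le (by
    rintro _ ⟨x, hx, rfl⟩
    exact (div_le_iff₀ (lpnorm_pos hx)).mpr (h x)) hC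

theorem lpnorm_mulVec_le_matOpNorm_mul [Fact (1 ≤ p)] [Fact (1 ≤ q)]
    (A : Matrix (Fin m) (Fin m) ℝ) (x : Fin m → ℝ) :
    lpnorm q (A *ᵥ x) ≤ matOpNorm p q A * lpnorm p x := by
  rcases eq_or_ne x 0 with rfl | hx
  · simp [lpnorm]
  let T := LinearMap.toContinuousLinearMap <| (WithLp.linearEquiv q ℝ (Fin m → ℝ)).symm.toLinearMap
    ∘ₗ A.mulVecLin ∘ₗ (WithLp.linearEquiv p ℝ (Fin m → ℝ)).toLinearMap
  have hbdd : BddAbove {c : ℝ | ∃ z : Fin m → ℝ, z ≠ 0 ∧ c = lpnorm q (A *ᵥ z) / lpnorm p z} := by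
    refine ⟨‖T‖, fun _ ⟨z, hz, hc⟩ => hc ▸ ?_⟩
    exact (div_le_iff₀ (lpnorm_pos hz)).mpr (T.le_opNorm (WithLp.toLp p z))
  exact (div_le_iff₀ (lpnorm_pos hx)).mp (le_csSup hbdd ⟨x, hx, rfl⟩)

end MatOpNorm

section ReproducingKernel

variable {X H : Type*} [NormedAddCommGroup H] [InnerProductSpace ℝ H] {m : ℕ}
  {ev : H → X → Fin m → ℝ} {k : X → X → Matrix (Fin m) (Fin m) ℝ}
  {K : X → (Fin m → ℝ) →ₗ[ℝ] H}

theorem inner_kernelSection_eq_dotProduct (hK : ∀ t u s, ev (K t u) s = k s t *ᵥ u)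
    (hrep : ∀ t u f, ∑ i, u i * ev f t i = (inner ℝ (K t u) f : ℝ)) (s t : X) (v u : Fin m → ℝ) :
    inner ℝ (K s v) (K t u) = v ⬝ᵥ (k s t *ᵥ u) := by
  rw [← hrep, hK]
  rfl

theorem norm_kernelSection_le (hK : ∀ t u s, ev (K t u) s = k s t *ᵥ u)
    (hrep : ∀ t u f, ∑ i, u i * ev f t i = (inner ℝ (K t u) f : ℝ))
    (a b : ℝ≥0∞) [a.HolderConjugate b] (t : X) (u : Fin m → ℝ) :
    ‖K t u‖ ≤ √(matOpNorm a b (k t t)) * lpnorm a u := by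
  have := Fact.mk (ENNReal.HolderConjugate.one_le a b)
  have := Fact.mk (ENNReal.HolderConjugate.one_le b a)
  rw [← Real.sqrt_sq (lpnorm_nonneg u), ← Real.sqrt_mul (matOpNorm_nonneg _),
    Real.le_sqrt (norm_nonneg _) (mul_nonneg (matOpNorm_nonneg _) (sq_nonneg _)),
    ← real_inner_self_eq_norm_sq, inner_kernelSection_eq_dotProduct hK hrep]
  calc u ⬝ᵥ (k t t *ᵥ u) ≤ lpnorm a u * lpnorm b (k t t *ᵥ u) :=
        dotProduct_le_norm_toLp_mul_norm_toLp u _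
    _ ≤ lpnorm a u * (matOpNorm a b (k t t) * lpnorm a u) := by
        gcongr
        · exact lpnorm_nonneg u
        · exact lpnorm_mulVec_le_matOpNorm_mul _ u
    _ = matOpNorm a b (k t t) * lpnorm a u ^ 2 := by ring

end ReproducingKernel

theorem rkhs_kernel_offdiag_bound_general {m : ℕ} {H : Type*}
    [NormedAddCommGroup H] [InnerProductSpace ℝ H]
    (ev : H →ₗ[ℝ] (stdSimplex ℝ (Fin m) → Fin m → ℝ))
    (k : stdSimplex ℝ (Fin m) → stdSimplex ℝ (Fin m) → Matrix (Fin m) (Fin m) ℝ)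
    (K : stdSimplex ℝ (Fin m) → (Fin m → ℝ) →ₗ[ℝ] H)
    (hK : ∀ t u s, ev (K t u) s = (k s t).mulVec u)
    (hrep : ∀ (t : stdSimplex ℝ (Fin m)) (u : Fin m → ℝ) (f : H),
      ∑ i, u i * ev f t i = (inner ℝ (K t u) f : ℝ))
    (p p' q q' : ℝ≥0∞)
    (hpconj : 1 / p + 1 / p' = 1) (hqconj : 1 / q + 1 / q' = 1)
    (s t : stdSimplex ℝ (Fin m)) :
    matOpNorm p q (k s t)
      ≤ Real.sqrt (matOpNorm q' q (k s s)) * Real.sqrt (matOpNorm p p' (k t t)) := by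
  have : p.HolderConjugate p' :=
    ENNReal.holderConjugate_iff.mpr (by simpa only [one_div] using hpconj)
  have : q.HolderConjugate q' :=
    ENNReal.holderConjugate_iff.mpr (by simpa only [one_div] using hqconj)
  have := Fact.mk (ENNReal.HolderConjugate.one_le p p')
  refine matOpNorm_le_of_lpnorm_mulVec_le (by positivity) fun x => ?_
  obtain ⟨y, hy, hyv⟩ :=
    exists_norm_toLp_le_one_dotProduct_eq_norm_toLp (a := q) (b := q') (k s t *ᵥ x)
  have hKs : ‖K s y‖ ≤ √(matOpNorm q' q (k s s)) :=
    (norm_kernelSection_le hK hrep q' q s y).trans (mul_le_of_le_one_right (Real.sqrt_nonneg _) hy)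
  calc lpnorm q (k s t *ᵥ x) = inner ℝ (K s y) (K t x) :=
        hyv.symm.trans (inner_kernelSection_eq_dotProduct hK hrep s t y x).symm
    _ ≤ ‖K s y‖ * ‖K t x‖ := real_inner_le_norm _ _
    _ ≤ √(matOpNorm q' q (k s s)) * (√(matOpNorm p p' (k t t)) * lpnorm p x) := by
        gcongr
        exact norm_kernelSection_le hK hrep p p' t x
    _ = _ := by ring

/-- For a vector-valued RKHS `H` on `Δ^m` with matrix-valued kernel `k`,
for all `s, t ∈ Δ^m` and `1 ≤ p, q ≤ ∞`,
`‖k(s,t)‖_{p;q} ≤ ‖k(s,s)‖_{q';q}^{1/2} · ‖k(t,t)‖_{p;p'}^{1/2}`,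
where `p'`, `q'` are the Hölder conjugates of `p`, `q`. -/
theorem rkhs_kernel_offdiag_bound {m : ℕ} {H : Type*}
    [NormedAddCommGroup H] [InnerProductSpace ℝ H] [CompleteSpace H]
    (ev : H →ₗ[ℝ] (stdSimplex ℝ (Fin m) → Fin m → ℝ))
    (hinj : Function.Injective ev)
    (k : stdSimplex ℝ (Fin m) → stdSimplex ℝ (Fin m) → Matrix (Fin m) (Fin m) ℝ)
    (K : stdSimplex ℝ (Fin m) → (Fin m → ℝ) →ₗ[ℝ] H)
    (hK : ∀ t u s, ev (K t u) s = (k s t).mulVec u)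
    (hrep : ∀ (t : stdSimplex ℝ (Fin m)) (u : Fin m → ℝ) (f : H),
      ∑ i, u i * ev f t i = (inner ℝ (K t u) f : ℝ))
    (p p' q q' : ℝ≥0∞) (hp : 1 ≤ p) (hp' : 1 ≤ p') (hq : 1 ≤ q) (hq' : 1 ≤ q')
    (hpconj : 1 / p + 1 / p' = 1) (hqconj : 1 / q + 1 / q' = 1)
    (s t : stdSimplex ℝ (Fin m)) :
    matOpNorm p q (k s t)
      ≤ Real.sqrt (matOpNorm q' q (k s s)) * Real.sqrt (matOpNorm p p' (k t t)) :=
  rkhs_kernel_offdiag_bound_general ev k K hK hrep p p' q q' hpconj hqconj s t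
end

section
/- Let F be the class of continuous functions f : Δ^m → ℝ^m. Then the calibration error CE[F, g] = sup_{f∈F} E[⟨Δ, f(G)⟩_{ℝ^m}] is zero if and only if the model g is calibrated in the strong sense (Δ = 0 almost surely). -/
/-!
Testing against `Pi.single i g` with `g` bounded continuous reduces the claim to a single
coordinate `d = δ · i` under the law of `G`. If `∫ d g = 0` for all such `g`, the finite measures
with densities `d⁺` and `d⁻` integrate every bounded continuous function alike, so they coincide
(on a metric space a finite Borel measure is determined by these integrals); hence `d⁺ = d⁻`
a.e., i.e. `d = 0` a.e. Since `f` and `-f` are tested together, the supremum vanishes exactly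
when every test integral does.
-/

open MeasureTheory
open scoped BoundedContinuousFunction

theorem ae_eq_zero_of_forall_integral_mul_boundedContinuous_eq_zero {X : Type*}
    [MeasurableSpace X] [TopologicalSpace X] [HasOuterApproxClosed X] [BorelSpace X]
    {μ : Measure X} {f : X → ℝ} (hf : Integrable f μ)
    (h : ∀ g : X →ᵇ ℝ, ∫ x, f x * g x ∂μ = 0) : f =ᵐ[μ] 0 := by
  have hpos : AEMeasurable (fun x => ENNReal.ofReal (f x)) μ := hf.aemeasurable.ennreal_ofReal
  have hneg : AEMeasurable (fun x => ENNReal.ofReal (-f x)) μ := hf.neg.aemeasurable.ennreal_ofReal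
  have := isFiniteMeasure_withDensity_ofReal hf.hasFiniteIntegral
  have := isFiniteMeasure_withDensity_ofReal hf.neg.hasFiniteIntegral
  have hparts : μ.withDensity (fun x => ENNReal.ofReal (f x))
      = μ.withDensity (fun x => ENNReal.ofReal (-f x)) := by
    refine ext_of_forall_integral_eq_of_IsFiniteMeasure fun g => ?_
    have hg {u : X → ℝ} (hu : Integrable u μ) : Integrable (fun x => max (u x) 0 * g x) μ :=
      hu.pos_part.mul_bdd g.continuous.measurable.aestronglyMeasurable
        (.of_forall g.norm_coe_le_norm)
    rw [integral_withDensity_eq_integral_toReal_smul₀ hpos (by simp),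
      integral_withDensity_eq_integral_toReal_smul₀ hneg (by simp), ← sub_eq_zero]
    simp only [ENNReal.toReal_ofReal', smul_eq_mul]
    rw [← integral_sub (hg hf) (hg (u := fun x => -f x) hf.neg)]
    simpa only [← sub_mul, max_zero_sub_max_neg_zero_eq_self] using h g
  have hfin : ∫⁻ x, ENNReal.ofReal (f x) ∂μ ≠ ⊤ :=
    ((lintegral_mono fun x => Real.ofReal_le_enorm (f x)).trans_lt hf.2).ne
  filter_upwards [(withDensity_eq_iff hpos hneg hfin).1 hparts] with x hx
  rcases lt_trichotomy (f x) 0 with hlt | heq | hgt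
  · simp [ENNReal.ofReal_eq_zero.2 hlt.le] at hx
    linarith
  · exact heq
  · simp [ENNReal.ofReal_eq_zero.2 (neg_nonpos.2 hgt.le)] at hx
    linarith

theorem forall_integral_sum_mul_continuous_eq_zero_iff {X ι : Type*}
    [MeasurableSpace X] [TopologicalSpace X] [HasOuterApproxClosed X] [BorelSpace X] [Fintype ι]
    {μ : Measure X} {δ : X → ι → ℝ} (hδ : Integrable δ μ) :
    (∀ f : X → ι → ℝ, Continuous f → ∫ x, ∑ i, δ x i * f x i ∂μ = 0) ↔ ∀ᵐ x ∂μ, δ x = 0 := by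
  classical
  constructor
  · intro h
    have hcoord (i : ι) : (fun x => δ x i) =ᵐ[μ] 0 := by
      refine ae_eq_zero_of_forall_integral_mul_boundedContinuous_eq_zero (hδ.eval i) fun g => ?_
      simpa [Pi.single_apply] using
        h (fun x => Pi.single i (g x)) ((continuous_single i).comp g.continuous)
    filter_upwards [ae_all_iff.2 hcoord] with x hx
    exact funext hx
  · intro h f _
    rw [integral_eq_zero_of_ae]
    filter_upwards [h] with x hx
    simp [hx]

theorem EReal.sSup_image_coe_eq_zero_iff {α : Type*} {S : Set α} {F : α → ℝ} (hS : S.Nonempty)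
    (hneg : ∀ f ∈ S, ∃ f' ∈ S, F f' = -F f) :
    sSup ((fun f => (F f : EReal)) '' S) = 0 ↔ ∀ f ∈ S, F f = 0 := by
  constructor
  · intro h f hf
    have hle (g) (hg : g ∈ S) : F g ≤ 0 := by
      exact_mod_cast h ▸ le_sSup (Set.mem_image_of_mem _ hg)
    obtain ⟨f', hf', hF⟩ := hneg f hf
    linarith [hle f hf, hle f' hf']
  · intro h
    have : (fun f => (F f : EReal)) '' S = {0} := by
      rw [Set.image_congr (fun f hf => by rw [h f hf])]
      exact hS.image_const _
    rw [this, sSup_singleton]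

/-- Let `F` be the class of continuous functions `f : Δ^m → ℝ^m`.  The
calibration error `CE[F,g] = sup_{f ∈ F} E[⟨Δ, f(G)⟩]` (supremum in the extended reals)
is zero if and only if the model is calibrated in the strong sense, i.e. `Δ = δ(G) = 0`
almost surely.  Here `G` is a random element of the simplex and `δ` is the (bounded,
measurable) calibration discrepancy function. -/
theorem calibration_error_continuous_eq_zero_iff
    {m : ℕ} {Ω : Type*} [MeasurableSpace Ω]
    (ℙ : Measure Ω) [IsProbabilityMeasure ℙ]
    (G : Ω → stdSimplex ℝ (Fin m)) (hG : Measurable G)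
    (δ : stdSimplex ℝ (Fin m) → Fin m → ℝ)
    (hδm : Measurable δ) (hδb : ∀ t, ‖δ t‖ ≤ 1) :
    sSup ((fun f : stdSimplex ℝ (Fin m) → Fin m → ℝ =>
        ((∫ ω, ∑ i, δ (G ω) i * f (G ω) i ∂ℙ : ℝ) : EReal)) '' {f | Continuous f}) = 0
      ↔ ∀ᵐ ω ∂ℙ, δ (G ω) = 0 := by
  have hδ : Integrable δ (ℙ.map G) :=
    .of_bound hδm.aestronglyMeasurable 1 (.of_forall hδb)
  rw [EReal.sSup_image_coe_eq_zero_iff ⟨0, continuous_const⟩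
      (fun f hf => ⟨-f, hf.neg, by simp [integral_neg]⟩),
    ← ae_map_iff hG.aemeasurable (p := fun t => δ t = 0) (hδm (measurableSet_singleton 0)),
    ← forall_integral_sum_mul_continuous_eq_zero_iff hδ]
  refine forall₂_congr fun f hf => ?_
  have hfm : Measurable f := Continuous.measurable hf
  rw [integral_map hG.aemeasurable (by fun_prop)]
end

section
/- Let k be a universal continuous matrix-valued kernel on Δ^m. Then the kernel calibration error KCE[k,g] is zero if and only if the model g is calibrated in the strong sense. -/
open MeasureTheory
open scoped ENNReal

/-
The functional `f ↦ E[⟨Δ, f(G)⟩]` is a bounded linear functional on the RKHS: point evaluations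
are bounded because `k` is continuous on the compact simplex. A bounded linear functional whose
supremum over the unit ball is `0` vanishes identically, and by universality it then vanishes on
every continuous test function. On a metric space, integrals against bounded continuous
functions determine an integrable function (indicators of closed sets are decreasing limits of
such functions), so `Δ = 0` almost surely with respect to the law of `G`.
-/

open Filter Topology BoundedContinuousFunction

theorem ae_eq_zero_of_forall_integral_smul_eq_zero {X E : Type*} [TopologicalSpace X]
    [HasOuterApproxClosed X] [MeasurableSpace X] [BorelSpace X]
    [NormedAddCommGroup E] [NormedSpace ℝ E] [CompleteSpace E] {μ : Measure X} {f : X → E}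
    (hf : Integrable f μ) (h : ∀ φ : X →ᵇ ℝ, ∫ x, φ x • f x ∂μ = 0) : f =ᵐ[μ] 0 := by
  refine ae_eq_zero_of_forall_setIntegral_isClosed_eq_zero hf fun F hF => ?_
  let φ : ℕ → X →ᵇ ℝ := fun n => (hF.apprSeq n).comp (↑) (LipschitzWith.subtype_val _)
  have hφ (n : ℕ) (x : X) : φ n x = hF.apprSeq n x := rfl
  have hlim : Tendsto (fun n => ∫ x, φ n x • f x ∂μ) atTop (𝓝 (∫ x in F, f x ∂μ)) := by
    rw [← integral_indicator hF.measurableSet]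
    refine tendsto_integral_of_dominated_convergence (fun x => ‖f x‖)
      (fun n => ((φ n).continuous.aestronglyMeasurable).smul hf.1) hf.norm
      (fun n => Eventually.of_forall fun x => ?_) (Eventually.of_forall fun x => ?_)
    · rw [norm_smul]
      refine mul_le_of_le_one_left (norm_nonneg _) ?_
      simpa [hφ] using HasOuterApproxClosed.apprSeq_apply_le_one hF n x
    · have := (NNReal.continuous_coe.tendsto _).comp
        (tendsto_pi_nhds.1 (HasOuterApproxClosed.tendsto_apprSeq hF) x)
      by_cases hx : x ∈ F <;> simpa [hφ, hx, Function.comp_def] using this.smul_const (f x)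
  simp only [h, tendsto_const_nhds_iff] at hlim
  exact hlim.symm

theorem continuous_of_continuous_uncurry_inner {T E : Type*} [TopologicalSpace T]
    [NormedAddCommGroup E] [InnerProductSpace ℝ E] {F : T → E}
    (h : Continuous fun p : T × T => inner ℝ (F p.1) (F p.2)) : Continuous F := by
  refine continuous_iff_continuousAt.2 fun t₀ => tendsto_iff_norm_sub_tendsto_zero.2 ?_
  have hsq : Tendsto (fun t => ‖F t - F t₀‖ ^ 2) (𝓝 t₀) (𝓝 0) := by
    have hc : Continuous fun t =>
        inner ℝ (F t) (F t) - 2 * inner ℝ (F t) (F t₀) + inner ℝ (F t₀) (F t₀) := by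
      have hcomp (a b : T → T) (ha : Continuous a) (hb : Continuous b) :=
        h.comp (ha.prodMk hb)
      exact ((hcomp id id continuous_id continuous_id).sub
        (continuous_const.mul (hcomp id _ continuous_id continuous_const))).add continuous_const
    convert hc.tendsto t₀ using 2
    · rw [norm_sub_sq_real, real_inner_self_eq_norm_sq, real_inner_self_eq_norm_sq]
    · ring
  simpa using hsq.sqrt

section Kernel

variable {T ι H : Type*} [Fintype ι] [NormedAddCommGroup H] [InnerProductSpace ℝ H]
  {ev : H →ₗ[ℝ] (T → ι → ℝ)} {K : T → (ι → ℝ) →ₗ[ℝ] H} {k : T → T → Matrix ι ι ℝ}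

theorem ev_apply_eq_inner [DecidableEq ι]
    (hrep : ∀ t u f, ∑ i, u i * ev f t i = inner ℝ (K t u) f)
    (f : H) (t : T) (i : ι) : ev f t i = inner ℝ (K t (Pi.single i 1)) f := by
  simpa [Pi.single_apply] using hrep t (Pi.single i 1) f

theorem inner_kernel_eq_dotProduct (hK : ∀ t u s, ev (K t u) s = (k s t).mulVec u)
    (hrep : ∀ t u f, ∑ i, u i * ev f t i = inner ℝ (K t u) f) (t s : T) (u v : ι → ℝ) :
    inner ℝ (K t u) (K s v) = u ⬝ᵥ (k t s).mulVec v := by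
  rw [← hrep, hK]
  rfl

variable [TopologicalSpace T]

theorem continuous_kernel_section (hK : ∀ t u s, ev (K t u) s = (k s t).mulVec u)
    (hrep : ∀ t u f, ∑ i, u i * ev f t i = inner ℝ (K t u) f)
    (hk : Continuous fun p : T × T => k p.1 p.2) (u : ι → ℝ) : Continuous fun t => K t u := by
  refine continuous_of_continuous_uncurry_inner ?_
  simp only [inner_kernel_eq_dotProduct hK hrep]
  exact continuous_const.dotProduct (hk.matrix_mulVec continuous_const)

theorem continuous_ev [DecidableEq ι] (hK : ∀ t u s, ev (K t u) s = (k s t).mulVec u)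
    (hrep : ∀ t u f, ∑ i, u i * ev f t i = inner ℝ (K t u) f)
    (hk : Continuous fun p : T × T => k p.1 p.2) (f : H) : Continuous (ev f) := by
  refine continuous_pi fun i => ?_
  simp only [ev_apply_eq_inner hrep]
  exact (continuous_kernel_section hK hrep hk _).inner continuous_const

theorem exists_norm_ev_le [DecidableEq ι] [CompactSpace T]
    (hK : ∀ t u s, ev (K t u) s = (k s t).mulVec u)
    (hrep : ∀ t u f, ∑ i, u i * ev f t i = inner ℝ (K t u) f)
    (hk : Continuous fun p : T × T => k p.1 p.2) : ∃ C, ∀ f t, ‖ev f t‖ ≤ C * ‖f‖ := by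
  obtain ⟨C, hC⟩ := isCompact_univ.exists_bound_of_continuousOn
    (continuous_pi fun i => continuous_kernel_section hK hrep hk (Pi.single i 1)).continuousOn
  refine ⟨max C 0, fun f t => (pi_norm_le_iff_of_nonneg (by positivity)).2 fun i => ?_⟩
  rw [ev_apply_eq_inner hrep, Real.norm_eq_abs]
  calc |inner ℝ (K t (Pi.single i 1)) f| ≤ ‖K t (Pi.single i 1)‖ * ‖f‖ :=
        abs_real_inner_le_norm _ _
    _ ≤ max C 0 * ‖f‖ := by
        gcongr
        exact (norm_le_pi_norm (fun i => K t (Pi.single i 1)) i).trans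
          ((hC t (Set.mem_univ t)).trans (le_max_left _ _))

end Kernel

theorem abs_dotProduct_le {ι : Type*} [Fintype ι] (a b : ι → ℝ) :
    |a ⬝ᵥ b| ≤ Fintype.card ι * ‖a‖ * ‖b‖ := by
  calc |a ⬝ᵥ b| ≤ ∑ i, |a i * b i| := Finset.abs_sum_le_sum_abs _ _
    _ ≤ ∑ _i : ι, ‖a‖ * ‖b‖ := by
        gcongr with i
        rw [abs_mul]
        exact mul_le_mul (norm_le_pi_norm a i) (norm_le_pi_norm b i) (abs_nonneg _) (norm_nonneg _)
    _ = Fintype.card ι * ‖a‖ * ‖b‖ := by simp [mul_assoc]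

section DotProduct

variable {T ι : Type*} [Fintype ι] [MeasurableSpace T] {ν : Measure T} {δ c : T → ι → ℝ}

theorem integrable_dotProduct (hδ : Integrable δ ν) (hc : AEStronglyMeasurable c ν) {B : ℝ}
    (hB : ∀ t, ‖c t‖ ≤ B) : Integrable (fun t => δ t ⬝ᵥ c t) ν :=
  ((hδ.norm.const_mul (Fintype.card ι)).mul_const B).mono'
    ((continuous_fst.dotProduct continuous_snd).comp_aestronglyMeasurable (hδ.1.prodMk hc))
    (Eventually.of_forall fun t =>
      (abs_dotProduct_le _ _).trans (mul_le_mul_of_nonneg_left (hB t) (by positivity)))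

theorem abs_integral_dotProduct_le (hδ : Integrable δ ν) {B : ℝ} (hB : ∀ t, ‖c t‖ ≤ B) :
    |∫ t, δ t ⬝ᵥ c t ∂ν| ≤ Fintype.card ι * (∫ t, ‖δ t‖ ∂ν) * B := by
  calc |∫ t, δ t ⬝ᵥ c t ∂ν| = ‖∫ t, δ t ⬝ᵥ c t ∂ν‖ := (Real.norm_eq_abs _).symm
    _ ≤ ∫ t, Fintype.card ι * ‖δ t‖ * B ∂ν :=
        norm_integral_le_of_norm_le ((hδ.norm.const_mul _).mul_const B) (Eventually.of_forall
          fun t => (abs_dotProduct_le _ _).trans (mul_le_mul_of_nonneg_left (hB t) (by positivity)))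
    _ = Fintype.card ι * (∫ t, ‖δ t‖ ∂ν) * B := by rw [integral_mul_const, integral_const_mul]

theorem ae_eq_zero_of_forall_integral_dotProduct_eq_zero [DecidableEq ι] [TopologicalSpace T]
    [HasOuterApproxClosed T] [BorelSpace T] (hδ : Integrable δ ν)
    (h : ∀ c : T →ᵇ (ι → ℝ), ∫ t, δ t ⬝ᵥ c t ∂ν = 0) : δ =ᵐ[ν] 0 := by
  have hcoord (i : ι) : (fun t => δ t i) =ᵐ[ν] 0 :=
    ae_eq_zero_of_forall_integral_smul_eq_zero (hδ.eval i) fun φ => by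
      have hφ (t : T) : (φ • const T (Pi.single i (1 : ℝ))) t = φ t • Pi.single i 1 := rfl
      have := h (φ • const T (Pi.single i 1))
      simp only [hφ] at this
      simpa [dotProduct_smul, dotProduct_single, mul_comm] using this
  filter_upwards [ae_all_iff.2 hcoord] with t ht using funext ht

end DotProduct

theorem ContinuousLinearMap.eq_zero_of_sSup_unitBall_eq_zero {E : Type*} [SeminormedAddCommGroup E]
    [NormedSpace ℝ E] (φ : E →L[ℝ] ℝ) (h : sSup {c : ℝ | ∃ f : E, ‖f‖ ≤ 1 ∧ c = φ f} = 0) :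
    φ = 0 := by
  have hbdd : BddAbove {c : ℝ | ∃ f : E, ‖f‖ ≤ 1 ∧ c = φ f} := by
    refine ⟨‖φ‖, ?_⟩
    rintro _ ⟨f, hf, rfl⟩
    exact (le_abs_self _).trans ((φ.le_opNorm f).trans (mul_le_of_le_one_right (norm_nonneg _) hf))
  have hle (f : E) (hf : ‖f‖ ≤ 1) : φ f ≤ 0 := h ▸ le_csSup hbdd ⟨f, hf, rfl⟩
  ext f
  -- rescale by `r = (‖f‖ + 1)⁻¹` rather than `‖f‖⁻¹`, which also covers `‖f‖ = 0`
  set r := (‖f‖ + 1)⁻¹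
  have hr : 0 < r := by positivity
  have hrf : ‖r • f‖ ≤ 1 := by
    rw [norm_smul, Real.norm_of_nonneg hr.le, inv_mul_le_one₀ (by positivity)]
    linarith
  have h₁ := hle (r • f) hrf
  have h₂ := hle (-(r • f)) (by rwa [norm_neg])
  simp only [map_neg, neg_nonpos, map_smul, smul_eq_mul] at h₁ h₂
  exact (mul_eq_zero.1 (le_antisymm h₁ h₂)).resolve_left hr.ne'

section Universal

variable {T ι H : Type*} [Fintype ι] [TopologicalSpace T] [CompactSpace T] [MeasurableSpace T]
  [NormedAddCommGroup H] [NormedSpace ℝ H]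
  {ν : Measure T} {δ : T → ι → ℝ} {ev : H →ₗ[ℝ] (T → ι → ℝ)}

theorem integrable_dotProduct_of_continuous [OpensMeasurableSpace T] (hδ : Integrable δ ν)
    {c : T → ι → ℝ} (hc : Continuous c) : Integrable (fun t => δ t ⬝ᵥ c t) ν :=
  have ⟨_, hB⟩ := isCompact_univ.exists_bound_of_continuousOn hc.continuousOn
  integrable_dotProduct hδ hc.aestronglyMeasurable fun t => hB t (Set.mem_univ t)

theorem integral_dotProduct_eq_zero_of_forall_ev [OpensMeasurableSpace T] (hδ : Integrable δ ν)
    (hcont : ∀ f, Continuous (ev f))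
    (hdense : ∀ c : T → ι → ℝ, Continuous c → ∀ ε : ℝ, 0 < ε → ∃ f : H, ∀ t, ‖ev f t - c t‖ < ε)
    (hev : ∀ f, ∫ t, δ t ⬝ᵥ ev f t ∂ν = 0) {c : T → ι → ℝ} (hc : Continuous c) :
    ∫ t, δ t ⬝ᵥ c t ∂ν = 0 := by
  refine eq_of_forall_dist_le fun ε hε => ?_
  set M := Fintype.card ι * ∫ t, ‖δ t‖ ∂ν
  have hM : 0 ≤ M := by positivity
  obtain ⟨f, hf⟩ := hdense c hc (ε / (M + 1)) (by positivity)
  have hsub : ∫ t, δ t ⬝ᵥ c t ∂ν = ∫ t, δ t ⬝ᵥ (c t - ev f t) ∂ν := by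
    simp only [dotProduct_sub]
    rw [integral_sub (integrable_dotProduct_of_continuous hδ hc)
      (integrable_dotProduct_of_continuous hδ (hcont f)), hev, sub_zero]
  rw [Real.dist_eq, sub_zero, hsub]
  calc |∫ t, δ t ⬝ᵥ (c t - ev f t) ∂ν| ≤ M * (ε / (M + 1)) :=
        abs_integral_dotProduct_le hδ fun t => by rw [norm_sub_rev]; exact (hf t).le
    _ ≤ ε := by
        rw [mul_div_assoc', div_le_iff₀ (by positivity)]
        nlinarith

theorem sSup_integral_dotProduct_eq_zero_iff [DecidableEq ι] [HasOuterApproxClosed T]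
    [BorelSpace T] (hδ : Integrable δ ν)
    (hcont : ∀ f, Continuous (ev f)) {C : ℝ} (hC : ∀ f t, ‖ev f t‖ ≤ C * ‖f‖)
    (hdense : ∀ c : T → ι → ℝ, Continuous c → ∀ ε : ℝ, 0 < ε → ∃ f : H, ∀ t, ‖ev f t - c t‖ < ε) :
    sSup {c : ℝ | ∃ f : H, ‖f‖ ≤ 1 ∧ c = ∫ t, δ t ⬝ᵥ ev f t ∂ν} = 0 ↔ δ =ᵐ[ν] 0 := by
  constructor
  · intro h
    have hint (f : H) : Integrable (fun t => δ t ⬝ᵥ ev f t) ν :=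
      integrable_dotProduct hδ (hcont f).aestronglyMeasurable (hC f)
    let Φ : H →L[ℝ] ℝ := LinearMap.mkContinuous
      { toFun := fun f => ∫ t, δ t ⬝ᵥ ev f t ∂ν
        map_add' := fun f g => by
          simp only [map_add, Pi.add_apply, dotProduct_add]
          exact integral_add (hint f) (hint g)
        map_smul' := fun a f => by
          simp only [map_smul, Pi.smul_apply, dotProduct_smul, smul_eq_mul, RingHom.id_apply]
          exact integral_const_mul a _ }
      (Fintype.card ι * (∫ t, ‖δ t‖ ∂ν) * C)
      fun f => (abs_integral_dotProduct_le hδ (hC f)).trans_eq (by ring)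
    have hev (f : H) : ∫ t, δ t ⬝ᵥ ev f t ∂ν = 0 :=
      DFunLike.congr_fun (Φ.eq_zero_of_sSup_unitBall_eq_zero h) f
    exact ae_eq_zero_of_forall_integral_dotProduct_eq_zero hδ fun c =>
      integral_dotProduct_eq_zero_of_forall_ev hδ hcont hdense hev c.continuous
  · intro h
    have hzero (f : H) : ∫ t, δ t ⬝ᵥ ev f t ∂ν = 0 :=
      integral_eq_zero_of_ae (by filter_upwards [h] with t ht; simp [ht])
    simp [hzero, show ∃ f : H, ‖f‖ ≤ 1 from ⟨0, by simp⟩]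

end Universal

theorem kce_eq_zero_iff_strongly_calibrated_general
    {m : ℕ} {H : Type*}
    [NormedAddCommGroup H] [InnerProductSpace ℝ H]
    (ev : H →ₗ[ℝ] (stdSimplex ℝ (Fin m) → Fin m → ℝ))
    (k : stdSimplex ℝ (Fin m) → stdSimplex ℝ (Fin m) → Matrix (Fin m) (Fin m) ℝ)
    (K : stdSimplex ℝ (Fin m) → (Fin m → ℝ) →ₗ[ℝ] H)
    (hK : ∀ t u s, ev (K t u) s = (k s t).mulVec u)
    (hrep : ∀ (t : stdSimplex ℝ (Fin m)) (u : Fin m → ℝ) (f : H),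
      ∑ i, u i * ev f t i = (inner ℝ (K t u) f : ℝ))
    (hkc : Continuous (fun st : stdSimplex ℝ (Fin m) × stdSimplex ℝ (Fin m) => k st.1 st.2))
    (huniv : ∀ c : stdSimplex ℝ (Fin m) → Fin m → ℝ, Continuous c →
      ∀ ε : ℝ, 0 < ε → ∃ f : H, ∀ t, ‖ev f t - c t‖ < ε)
    {Ω 𝒳 : Type*} [MeasurableSpace Ω]
    (ℙ : Measure Ω)
    (X : Ω → 𝒳) (Y : Ω → Fin m)
    (g : 𝒳 → stdSimplex ℝ (Fin m)) (hgX : Measurable (fun ω => g (X ω)))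
    (δ : stdSimplex ℝ (Fin m) → Fin m → ℝ) (hδm : Measurable δ)
    (hδ : (fun ω => δ (g (X ω))) =ᵐ[ℙ]
      MeasureTheory.condExp (MeasurableSpace.comap (fun ω => g (X ω)) inferInstance) ℙ
        (fun ω => (fun i => (if Y ω = i then (1 : ℝ) else 0) - (g (X ω) : Fin m → ℝ) i))) :
    sSup {c : ℝ | ∃ f : H, ‖f‖ ≤ 1 ∧
        c = ∫ ω, ∑ i, δ (g (X ω)) i * ev f (g (X ω)) i ∂ℙ} = 0
      ↔ ∀ᵐ ω ∂ℙ, δ (g (X ω)) = 0 := by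
  set ν := ℙ.map fun ω => g (X ω)
  have hν : Integrable δ ν := (integrable_map_measure hδm.aestronglyMeasurable hgX.aemeasurable).2
    (integrable_condExp.congr hδ.symm)
  have hcont := continuous_ev hK hrep hkc
  have hmap (f : H) : ∫ ω, ∑ i, δ (g (X ω)) i * ev f (g (X ω)) i ∂ℙ = ∫ t, δ t ⬝ᵥ ev f t ∂ν :=
    (integral_map hgX.aemeasurable (integrable_dotProduct_of_continuous hν (hcont f)).1).symm
  have hae : (∀ᵐ ω ∂ℙ, δ (g (X ω)) = 0) ↔ δ =ᵐ[ν] 0 :=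
    (ae_map_iff hgX.aemeasurable (hδm (measurableSet_singleton 0))).symm
  obtain ⟨C, hC⟩ := exists_norm_ev_le hK hrep hkc
  simp only [hmap, hae]
  exact sSup_integral_dotProduct_eq_zero_iff hν hcont hC huniv

/-- Let `k` be a universal continuous matrix-valued kernel on `Δ^m`
(universality: the RKHS of `k` is uniformly dense in `C(Δ^m, ℝ^m)`).  Then the kernel
calibration error `KCE[k,g]` — the supremum of `E[⟨Δ, f(G)⟩]` over the unit ball of the
RKHS — is zero if and only if the model `g` is calibrated in the strong sense, i.e. the
calibration discrepancy `Δ = δ(g(X)) = E[e_Y − g(X) | g(X)]` vanishes almost surely. -/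
theorem kce_eq_zero_iff_strongly_calibrated
    {m : ℕ} {H : Type*}
    [NormedAddCommGroup H] [InnerProductSpace ℝ H] [CompleteSpace H]
    (ev : H →ₗ[ℝ] (stdSimplex ℝ (Fin m) → Fin m → ℝ))
    (hinj : Function.Injective ev)
    (k : stdSimplex ℝ (Fin m) → stdSimplex ℝ (Fin m) → Matrix (Fin m) (Fin m) ℝ)
    (K : stdSimplex ℝ (Fin m) → (Fin m → ℝ) →ₗ[ℝ] H)
    (hK : ∀ t u s, ev (K t u) s = (k s t).mulVec u)
    (hrep : ∀ (t : stdSimplex ℝ (Fin m)) (u : Fin m → ℝ) (f : H),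
      ∑ i, u i * ev f t i = (inner ℝ (K t u) f : ℝ))
    (hkc : Continuous (fun st : stdSimplex ℝ (Fin m) × stdSimplex ℝ (Fin m) => k st.1 st.2))
    (huniv : ∀ c : stdSimplex ℝ (Fin m) → Fin m → ℝ, Continuous c →
      ∀ ε : ℝ, 0 < ε → ∃ f : H, ∀ t, ‖ev f t - c t‖ < ε)
    {Ω 𝒳 : Type*} [MeasurableSpace Ω] [MeasurableSpace 𝒳]
    (ℙ : Measure Ω) [IsProbabilityMeasure ℙ]
    (X : Ω → 𝒳) (Y : Ω → Fin m) (hY : Measurable Y)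
    (g : 𝒳 → stdSimplex ℝ (Fin m)) (hgX : Measurable (fun ω => g (X ω)))
    (δ : stdSimplex ℝ (Fin m) → Fin m → ℝ) (hδm : Measurable δ)
    (hδ : (fun ω => δ (g (X ω))) =ᵐ[ℙ]
      MeasureTheory.condExp (MeasurableSpace.comap (fun ω => g (X ω)) inferInstance) ℙ
        (fun ω => (fun i => (if Y ω = i then (1 : ℝ) else 0) - (g (X ω) : Fin m → ℝ) i))) :
    sSup {c : ℝ | ∃ f : H, ‖f‖ ≤ 1 ∧
        c = ∫ ω, ∑ i, δ (g (X ω)) i * ev f (g (X ω)) i ∂ℙ} = 0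
      ↔ ∀ᵐ ω ∂ℙ, δ (g (X ω)) = 0 :=
  kce_eq_zero_iff_strongly_calibrated_general ev k K hK hrep hkc huniv ℙ X Y g hgX δ hδm hδ
end

section
/- Consider the generative model where g(X) ~ Dir(a,…,a) on Δ^m (a > 0), and Y | g(X) = γ is drawn from Categorical(β) with probability π and from Categorical(γ) with probability 1−π. If β = (1/m,…,1/m), then the expected calibration error with respect to the total variation distance equals ECE = π · m^{−a}(1 − 1/m)^{(m−1)a} / (a · B(a, (m−1)a)), where B denotes the Beta function; in particular, as m → ∞ this tends to π e^{−a} a^{a−1} / Γ(a). -/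
/-! Each coordinate `G_i` is `Beta(a, b)` with `b = (m - 1) a`, whose mean is `μ = 1/m`.
Since `x ↦ x^a (1 - x)^b` has derivative `(a - (a + b) x) x^(a-1) (1 - x)^(b-1)`, which
changes sign exactly at `μ`, the mean absolute deviation is
`E|μ - G_i| = 2 μ^a (1 - μ)^b / ((a + b) B(a, b))`; summing over the `m` coordinates gives the
closed form.

For the limit, `B(a, b) = Γ(a) Γ(b) / Γ(a + b)` rewrites the closed form as
`π a^(a-1) / Γ(a) · ((1 - 1/m)^m)^a · Γ(b + a) / (Γ(b) b^a)`. The last factor tends to `1`: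
for `0 ≤ a ≤ 1` by Wendel's inequalities, which come from the log-convexity of `Γ`, and in
general by the functional equation `Γ(x + 1) = x Γ(x)`. -/

open MeasureTheory Filter
open scoped ENNReal Topology

/-- The real Beta function `B(a,b) = ∫_0^1 x^{a-1} (1-x)^{b-1} dx`. -/
noncomputable def betaFun (a b : ℝ) : ℝ :=
  ∫ x in (0 : ℝ)..1, x ^ (a - 1) * (1 - x) ^ (b - 1)

open Set

section BetaFunction

variable {a b : ℝ}

private lemma ofReal_betaIntegrand {x : ℝ} (hx : x ∈ Icc (0 : ℝ) 1) :
    (x : ℂ) ^ ((a : ℂ) - 1) * (1 - (x : ℂ)) ^ ((b : ℂ) - 1)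
      = ((x ^ (a - 1) * (1 - x) ^ (b - 1) : ℝ) : ℂ) := by
  rw [Complex.ofReal_mul, Complex.ofReal_cpow hx.1, Complex.ofReal_cpow (sub_nonneg.2 hx.2)]
  push_cast
  rfl

lemma betaIntegral_ofReal (a b : ℝ) : Complex.betaIntegral a b = betaFun a b := by
  rw [Complex.betaIntegral, betaFun, ← intervalIntegral.integral_ofReal]
  refine intervalIntegral.integral_congr fun x hx => ?_
  rw [uIcc_of_le zero_le_one] at hx
  exact ofReal_betaIntegrand hx

lemma intervalIntegrable_rpow_mul_one_sub_rpow (ha : 0 < a) (hb : 0 < b) :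
    IntervalIntegrable (fun x : ℝ => x ^ (a - 1) * (1 - x) ^ (b - 1)) volume 0 1 := by
  have h := (Complex.betaIntegral_convergent (u := a) (v := b) (by simpa) (by simpa)).norm
  refine h.congr_ae ?_
  rw [uIoc_of_le zero_le_one]
  filter_upwards [ae_restrict_mem measurableSet_Ioc] with x hx
  rw [ofReal_betaIntegrand (Ioc_subset_Icc_self hx), Complex.norm_real, Real.norm_eq_abs,
    abs_of_nonneg (by have := hx.1.le; have := sub_nonneg.2 hx.2; positivity)]

lemma betaFun_eq_beta (ha : 0 < a) (hb : 0 < b) : betaFun a b = ProbabilityTheory.beta a b := by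
  rw [ProbabilityTheory.beta_eq_betaIntegralReal a b ha hb, betaIntegral_ofReal,
    Complex.ofReal_re]

end BetaFunction

section MeanAbsoluteDeviation

variable {a b : ℝ}

lemma hasDerivAt_rpow_mul_one_sub_rpow {x : ℝ} (hx : x ∈ Ioo (0 : ℝ) 1) :
    HasDerivAt (fun x : ℝ => x ^ a * (1 - x) ^ b)
      ((a - (a + b) * x) * (x ^ (a - 1) * (1 - x) ^ (b - 1))) x := by
  have hx0 : x ≠ 0 := hx.1.ne'
  have hx1 : 1 - x ≠ 0 := sub_ne_zero.2 hx.2.ne'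
  have d1 : HasDerivAt (fun x : ℝ => x ^ a) (a * x ^ (a - 1)) x :=
    Real.hasDerivAt_rpow_const (Or.inl hx0)
  have d2 : HasDerivAt (fun x : ℝ => (1 - x) ^ b) (b * (1 - x) ^ (b - 1) * -1) x :=
    (Real.hasDerivAt_rpow_const (Or.inl hx1)).comp x ((hasDerivAt_id x).const_sub 1)
  refine (d1.mul d2).congr_deriv ?_
  rw [Real.rpow_sub_one hx0, Real.rpow_sub_one hx1]
  field_simp
  ring

lemma integral_mean_sub_mul_rpow_mul_one_sub_rpow (ha : 0 < a) (hb : 0 < b) {μ : ℝ}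
    (hμ : μ = a / (a + b)) {s t : ℝ} (hs : 0 ≤ s) (hst : s ≤ t) (ht : t ≤ 1) :
    ∫ x in s..t, (μ - x) * (x ^ (a - 1) * (1 - x) ^ (b - 1))
      = (t ^ a * (1 - t) ^ b - s ^ a * (1 - s) ^ b) / (a + b) := by
  have hab : a + b ≠ 0 := (add_pos ha hb).ne'
  have hsub : uIcc s t ⊆ uIcc 0 1 := by
    rw [uIcc_of_le hst, uIcc_of_le zero_le_one]; exact Icc_subset_Icc hs ht
  have hderiv : ∀ x ∈ Ioo s t, HasDerivAt (fun x : ℝ => x ^ a * (1 - x) ^ b / (a + b))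
      ((μ - x) * (x ^ (a - 1) * (1 - x) ^ (b - 1))) x := fun x hx => by
    refine ((hasDerivAt_rpow_mul_one_sub_rpow
      ⟨hs.trans_lt hx.1, hx.2.trans_le ht⟩).div_const (a + b)).congr_deriv ?_
    rw [hμ]
    field_simp
  rw [sub_div]
  exact intervalIntegral.integral_eq_sub_of_hasDerivAt_of_le hst
    (by fun_prop (disch := positivity)) hderiv
    (((intervalIntegrable_rpow_mul_one_sub_rpow ha hb).mono_set hsub).continuousOn_mul
      (by fun_prop))

lemma integral_abs_sub_mul_rpow_mul_one_sub_rpow (ha : 0 < a) (hb : 0 < b) {μ : ℝ}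
    (hμ : μ = a / (a + b)) :
    ∫ x in (0 : ℝ)..1, |μ - x| * (x ^ (a - 1) * (1 - x) ^ (b - 1))
      = 2 * μ ^ a * (1 - μ) ^ b / (a + b) := by
  have hμ0 : 0 ≤ μ := hμ ▸ by positivity
  have hμ1 : μ ≤ 1 := hμ ▸ (div_le_one (add_pos ha hb)).2 (by linarith)
  have hint : ∀ s t, s ∈ Icc (0 : ℝ) 1 → t ∈ Icc (0 : ℝ) 1 → IntervalIntegrable
      (fun x => |μ - x| * (x ^ (a - 1) * (1 - x) ^ (b - 1))) volume s t := fun s t hs ht =>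
    ((intervalIntegrable_rpow_mul_one_sub_rpow ha hb).mono_set
      (uIcc_subset_uIcc (by simpa using hs) (by simpa using ht))).continuousOn_mul (by fun_prop)
  have hleft : ∫ x in (0 : ℝ)..μ, |μ - x| * (x ^ (a - 1) * (1 - x) ^ (b - 1))
      = ∫ x in (0 : ℝ)..μ, (μ - x) * (x ^ (a - 1) * (1 - x) ^ (b - 1)) :=
    intervalIntegral.integral_congr fun x hx => by
      rw [uIcc_of_le hμ0] at hx
      rw [abs_of_nonneg (sub_nonneg.2 hx.2)]
  have hright : ∫ x in μ..1, |μ - x| * (x ^ (a - 1) * (1 - x) ^ (b - 1))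
      = -∫ x in μ..1, (μ - x) * (x ^ (a - 1) * (1 - x) ^ (b - 1)) := by
    rw [← intervalIntegral.integral_neg]
    refine intervalIntegral.integral_congr fun x hx => ?_
    rw [uIcc_of_le hμ1] at hx
    rw [abs_of_nonpos (sub_nonpos.2 hx.1), neg_mul]
  rw [← intervalIntegral.integral_add_adjacent_intervals (hint 0 μ ⟨le_rfl, zero_le_one⟩
    ⟨hμ0, hμ1⟩) (hint μ 1 ⟨hμ0, hμ1⟩ ⟨zero_le_one, le_rfl⟩), hleft, hright,
    integral_mean_sub_mul_rpow_mul_one_sub_rpow ha hb hμ le_rfl hμ0 hμ1,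
    integral_mean_sub_mul_rpow_mul_one_sub_rpow ha hb hμ hμ0 hμ1 le_rfl,
    Real.zero_rpow ha.ne', sub_self, Real.zero_rpow hb.ne']
  ring

end MeanAbsoluteDeviation

section Law

variable {Ω : Type*} [MeasurableSpace Ω] {ℙ : Measure Ω} {X : Ω → ℝ}

lemma integral_comp_eq_intervalIntegral_of_map_eq_withDensity (hX : Measurable X)
    {ρ : ℝ → ℝ} (hρ : Measurable ρ) (hρ0 : ∀ x ∈ Ioo (0 : ℝ) 1, 0 ≤ ρ x)
    (hlaw : ℙ.map X =
      (volume.restrict (Ioo (0 : ℝ) 1)).withDensity (fun x => ENNReal.ofReal (ρ x)))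
    {φ : ℝ → ℝ} (hφ : Continuous φ) :
    ∫ ω, φ (X ω) ∂ℙ = ∫ x in (0 : ℝ)..1, ρ x * φ x := by
  rw [← integral_map hX.aemeasurable hφ.aestronglyMeasurable, hlaw,
    integral_withDensity_eq_integral_toReal_smul hρ.ennreal_ofReal
      (ae_of_all _ fun _ => ENNReal.ofReal_lt_top),
    intervalIntegral.integral_of_le zero_le_one, integral_Ioc_eq_integral_Ioo]
  refine setIntegral_congr_fun measurableSet_Ioo fun x hx => ?_
  rw [ENNReal.toReal_ofReal (hρ0 x hx), smul_eq_mul]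

lemma integral_abs_sub_of_map_eq_beta (hX : Measurable X) {a b : ℝ} (ha : 0 < a) (hb : 0 < b)
    (hlaw : ℙ.map X = (volume.restrict (Ioo (0 : ℝ) 1)).withDensity
      (fun x => ENNReal.ofReal (x ^ (a - 1) * (1 - x) ^ (b - 1) / betaFun a b)))
    {μ : ℝ} (hμ : μ = a / (a + b)) :
    ∫ ω, |μ - X ω| ∂ℙ = 2 * μ ^ a * (1 - μ) ^ b / ((a + b) * betaFun a b) := by
  have hB : 0 < betaFun a b := betaFun_eq_beta ha hb ▸ ProbabilityTheory.beta_pos ha hb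
  rw [integral_comp_eq_intervalIntegral_of_map_eq_withDensity hX (by fun_prop)
    (fun x hx => by have := hx.1.le; have := sub_nonneg.2 hx.2.le; positivity) hlaw
    (by fun_prop : Continuous fun x => |μ - x|)]
  calc _ = (∫ x in (0 : ℝ)..1, |μ - x| * (x ^ (a - 1) * (1 - x) ^ (b - 1))) / betaFun a b := by
        rw [← intervalIntegral.integral_div]
        congr 1 with x
        ring
    _ = _ := by
        rw [integral_abs_sub_mul_rpow_mul_one_sub_rpow ha hb hμ, div_div]

end Law

lemma tendsto_add_div_self_atTop (c : ℝ) :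
    Tendsto (fun x : ℝ => (x + c) / x) atTop (𝓝 1) := by
  have h : Tendsto (fun x : ℝ => 1 + c / x) atTop (𝓝 (1 + 0)) :=
    tendsto_const_nhds.add (tendsto_const_nhds.div_atTop tendsto_id)
  rw [add_zero] at h
  refine h.congr' ?_
  filter_upwards [eventually_ne_atTop 0] with x hx
  field_simp

namespace Real

lemma Gamma_convexComb_le_rpow_mul_rpow {s t w : ℝ} (hs : 0 < s) (ht : 0 < t) (hw0 : 0 ≤ w)
    (hw1 : w ≤ 1) : Gamma ((1 - w) * s + w * t) ≤ Gamma s ^ (1 - w) * Gamma t ^ w := by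
  have hΓs := Gamma_pos_of_pos hs
  have hΓt := Gamma_pos_of_pos ht
  have h := convexOn_log_Gamma.2 (mem_Ioi.2 hs) (mem_Ioi.2 ht) (sub_nonneg.2 hw1) hw0
    (sub_add_cancel 1 w)
  simp only [Function.comp_apply, smul_eq_mul] at h
  have hpos : 0 < (1 - w) * s + w * t := by
    rcases hw0.eq_or_lt with rfl | hw
    · simpa using hs
    · nlinarith
  rw [rpow_def_of_pos hΓs, rpow_def_of_pos hΓt, ← exp_add,
    ← log_le_iff_le_exp (Gamma_pos_of_pos hpos)]
  linarith

lemma Gamma_add_le_Gamma_mul_rpow {x c : ℝ} (hx : 0 < x) (hc0 : 0 ≤ c) (hc1 : c ≤ 1) :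
    Gamma (x + c) ≤ Gamma x * x ^ c := by
  have h := Gamma_convexComb_le_rpow_mul_rpow hx (by linarith : 0 < x + 1) hc0 hc1
  rwa [show (1 - c) * x + c * (x + 1) = x + c by ring, Gamma_add_one hx.ne',
    mul_rpow hx.le (Gamma_pos_of_pos hx).le, ← mul_assoc, mul_right_comm,
    ← rpow_add (Gamma_pos_of_pos hx),
    sub_add_cancel, rpow_one] at h

lemma mul_Gamma_le_Gamma_add_mul_rpow {x c : ℝ} (hx : 0 < x) (hc0 : 0 ≤ c) (hc1 : c ≤ 1) :
    x * Gamma x ≤ Gamma (x + c) * (x + c) ^ (1 - c) := by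
  have hxc : 0 < x + c := by linarith
  have h := Gamma_convexComb_le_rpow_mul_rpow hxc (by linarith : 0 < x + c + 1)
    (sub_nonneg.2 hc1) (by linarith)
  rw [show (1 - (1 - c)) * (x + c) + (1 - c) * (x + c + 1) = x + 1 by ring, Gamma_add_one hx.ne',
    Gamma_add_one hxc.ne', mul_rpow hxc.le (Gamma_pos_of_pos hxc).le, sub_sub_cancel,
    mul_left_comm, ← rpow_add (Gamma_pos_of_pos hxc), add_sub_cancel, rpow_one] at h
  linarith

lemma tendsto_Gamma_add_div_Gamma_mul_rpow_of_le_one {c : ℝ} (hc0 : 0 ≤ c) (hc1 : c ≤ 1) :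
    Tendsto (fun x => Gamma (x + c) / (Gamma x * x ^ c)) atTop (𝓝 1) := by
  have hlower : Tendsto (fun x : ℝ => (x / (x + c)) ^ (1 - c)) atTop (𝓝 1) := by
    have h : Tendsto (fun x : ℝ => x / (x + c)) atTop (𝓝 1) := by
      simpa using (tendsto_add_div_self_atTop c).inv₀ one_ne_zero
    simpa using h.rpow_const (Or.inl one_ne_zero)
  refine tendsto_of_tendsto_of_tendsto_of_le_of_le' hlower tendsto_const_nhds ?_ ?_
  all_goals filter_upwards [eventually_gt_atTop 0] with x hx
  · have hxc : 0 < x + c := by linarith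
    have hΓ := Gamma_pos_of_pos hx
    rw [div_rpow hx.le hxc.le, div_le_div_iff₀ (by positivity) (by positivity),
      mul_left_comm, ← rpow_add hx, sub_add_cancel, rpow_one, mul_comm]
    exact mul_Gamma_le_Gamma_add_mul_rpow hx hc0 hc1
  · rw [div_le_one (by have := Gamma_pos_of_pos hx; positivity)]
    exact Gamma_add_le_Gamma_mul_rpow hx hc0 hc1

lemma tendsto_Gamma_add_div_Gamma_mul_rpow {c : ℝ} (hc : 0 ≤ c) :
    Tendsto (fun x => Gamma (x + c) / (Gamma x * x ^ c)) atTop (𝓝 1) := by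
  suffices h : ∀ n : ℕ, ∀ r ∈ Icc (0 : ℝ) 1,
      Tendsto (fun x => Gamma (x + (r + n)) / (Gamma x * x ^ (r + n))) atTop (𝓝 1) by
    simpa using h ⌊c⌋₊ (c - ⌊c⌋₊)
      ⟨sub_nonneg.2 (Nat.floor_le hc), by linarith [Nat.lt_floor_add_one c]⟩
  intro n r hr
  induction n with
  | zero => simpa using tendsto_Gamma_add_div_Gamma_mul_rpow_of_le_one hr.1 hr.2
  | succ n ih =>
    have h := (tendsto_add_div_self_atTop (r + n)).mul ih
    rw [one_mul] at h
    refine h.congr' ?_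
    filter_upwards [eventually_gt_atTop 0] with x hx
    have hxrn : 0 < x + (r + n) := by have := hr.1; positivity
    rw [Nat.cast_succ, ← add_assoc r, ← add_assoc x (r + n) 1, Gamma_add_one hxrn.ne',
      rpow_add_one hx.ne']
    have := Gamma_pos_of_pos hx
    have := rpow_pos_of_pos hx (r + n)
    field_simp

end Real

/-- The number of classes `m` is extended to a real variable `t`, so that the limit `m → ∞` can
be taken along `atTop : Filter ℝ`. -/
noncomputable def dirichletUniformECE (a p t : ℝ) : ℝ :=
  p * t ^ (-a) * (1 - 1 / t) ^ ((t - 1) * a) / (a * betaFun a ((t - 1) * a))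

open Real in
lemma dirichletUniformECE_eq {a : ℝ} (ha : 0 < a) (p : ℝ) {t : ℝ} (ht : 1 < t) :
    dirichletUniformECE a p t = p * a ^ (a - 1) / Gamma a * ((1 - 1 / t) ^ t) ^ a
      * (Gamma ((t - 1) * a + a) / (Gamma ((t - 1) * a) * ((t - 1) * a) ^ a)) := by
  have ht0 : 0 < t := by linarith
  have ht1 : 0 < t - 1 := by linarith
  have hy : 0 < (t - 1) * a := mul_pos ht1 ha
  have hq : 0 < 1 - 1 / t := by rw [sub_pos, div_lt_one ht0]; exact ht
  have hpow : (1 - 1 / t) ^ ((t - 1) * a) = ((1 - 1 / t) ^ t) ^ a / ((t - 1) ^ a / t ^ a) := by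
    rw [← rpow_mul hq.le, sub_mul, one_mul, rpow_sub hq, ← div_rpow ht1.le ht0.le, sub_div,
      div_self ht0.ne']
  have hB : betaFun a ((t - 1) * a) = Gamma a * Gamma ((t - 1) * a) / Gamma ((t - 1) * a + a) := by
    rw [betaFun_eq_beta ha hy, ProbabilityTheory.beta, add_comm a]
  have := Gamma_pos_of_pos ha
  have := Gamma_pos_of_pos hy
  have := Gamma_pos_of_pos (add_pos hy ha)
  have := rpow_pos_of_pos ht0 a
  have := rpow_pos_of_pos ht1 a
  have := rpow_pos_of_pos ha a
  rw [dirichletUniformECE, hpow, hB, mul_rpow ht1.le ha.le, rpow_neg ht0.le, rpow_sub_one ha.ne']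
  field_simp

open Real in
lemma tendsto_dirichletUniformECE {a : ℝ} (ha : 0 < a) (p : ℝ) :
    Tendsto (dirichletUniformECE a p) atTop (𝓝 (p * exp (-a) * a ^ (a - 1) / Gamma a)) := by
  have hexp : Tendsto (fun t : ℝ => ((1 - 1 / t) ^ t) ^ a) atTop (𝓝 (exp (-a))) := by
    have h := (tendsto_one_add_div_rpow_exp (-1)).rpow_const (p := a) (Or.inl (exp_pos _).ne')
    rw [← exp_mul, neg_one_mul] at h
    simpa [neg_div, ← sub_eq_add_neg] using h
  have hshape : Tendsto (fun t : ℝ => (t - 1) * a) atTop atTop :=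
    (tendsto_atTop_add_const_right atTop (-1) tendsto_id).atTop_mul_const ha
  have hratio := (tendsto_Gamma_add_div_Gamma_mul_rpow ha.le).comp hshape
  have h := (tendsto_const_nhds (x := p * a ^ (a - 1) / Gamma a)).mul hexp |>.mul hratio
  rw [mul_one] at h
  rw [show p * exp (-a) * a ^ (a - 1) / Gamma a = p * a ^ (a - 1) / Gamma a * exp (-a) by ring]
  refine h.congr' ?_
  filter_upwards [eventually_gt_atTop 1] with t ht
  exact (dirichletUniformECE_eq ha p ht).symm

theorem ece_dirichlet_uniform_target_general
    {m : ℕ} (hm : 2 ≤ m) (a : ℝ) (ha : 0 < a) (pi : ℝ) (hpi0 : 0 ≤ pi)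
    {Ω : Type*} [MeasurableSpace Ω] (ℙ : Measure Ω) [IsProbabilityMeasure ℙ]
    (G : Ω → stdSimplex ℝ (Fin m)) (hG : Measurable G)
    (hmarg : ∀ i : Fin m, Measure.map (fun ω => (G ω : Fin m → ℝ) i) ℙ
      = (volume.restrict (Set.Ioo (0 : ℝ) 1)).withDensity
          (fun x => ENNReal.ofReal
            (x ^ (a - 1) * (1 - x) ^ (((m : ℝ) - 1) * a - 1)
              / betaFun a (((m : ℝ) - 1) * a)))) :
    (∫ ω, (1 / 2) * ∑ i, |pi * (1 / (m : ℝ) - (G ω : Fin m → ℝ) i)| ∂ℙ)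
        = pi * (m : ℝ) ^ (-a) * (1 - 1 / (m : ℝ)) ^ (((m : ℝ) - 1) * a)
            / (a * betaFun a (((m : ℝ) - 1) * a))
      ∧ Tendsto (fun M : ℕ =>
            pi * (M : ℝ) ^ (-a) * (1 - 1 / (M : ℝ)) ^ (((M : ℝ) - 1) * a)
              / (a * betaFun a (((M : ℝ) - 1) * a)))
          atTop (𝓝 (pi * Real.exp (-a) * a ^ (a - 1) / Real.Gamma a)) := by
  refine ⟨?_, (tendsto_dirichletUniformECE ha pi).comp tendsto_natCast_atTop_atTop⟩
  have hm2 : (2 : ℝ) ≤ m := by exact_mod_cast hm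
  have hm0 : (m : ℝ) ≠ 0 := (by linarith : (0 : ℝ) < m).ne'
  have hb : 0 < ((m : ℝ) - 1) * a := mul_pos (by linarith) ha
  have hsum : a + ((m : ℝ) - 1) * a = m * a := by ring
  have hmean : 1 / (m : ℝ) = a / (a + ((m : ℝ) - 1) * a) := by rw [hsum]; field_simp
  have hGi : ∀ i, Measurable fun ω => (G ω : Fin m → ℝ) i := fun i =>
    (measurable_pi_apply i).comp (measurable_subtype_coe.comp hG)
  have hcoord : ∀ i, ∫ ω, |pi * (1 / (m : ℝ) - (G ω : Fin m → ℝ) i)| ∂ℙ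
      = pi * (2 * (1 / (m : ℝ)) ^ a * (1 - 1 / (m : ℝ)) ^ (((m : ℝ) - 1) * a)
        / ((a + ((m : ℝ) - 1) * a) * betaFun a (((m : ℝ) - 1) * a))) := fun i => by
    simp_rw [abs_mul, abs_of_nonneg hpi0]
    rw [integral_const_mul, integral_abs_sub_of_map_eq_beta (hGi i) ha hb (hmarg i) hmean]
  have hint : ∀ i, Integrable (fun ω => |pi * (1 / (m : ℝ) - (G ω : Fin m → ℝ) i)|) ℙ :=
    fun i => Integrable.of_bound (by fun_prop) |pi| (ae_of_all _ fun ω => by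
      rw [Real.norm_eq_abs, abs_abs, abs_mul]
      refine mul_le_of_le_one_right (abs_nonneg _) (abs_sub_le_of_nonneg_of_le (by positivity)
        ((div_le_one (by positivity)).2 (by linarith)) (stdSimplex.zero_le (G ω) i)
        (stdSimplex.le_one (G ω) i)))
  rw [integral_const_mul, integral_finsetSum _ fun i _ => hint i,
    Finset.sum_congr rfl fun i _ => hcoord i, Finset.sum_const, Finset.card_univ,
    Fintype.card_fin, nsmul_eq_mul, one_div (m : ℝ), Real.inv_rpow (by positivity),
    ← Real.rpow_neg (by positivity), hsum]
  field_simp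

/-- Consider the generative model where the prediction
`G = g(X) ~ Dir(a,…,a)` on `Δ^m` (so each marginal `G_i` is `Beta(a, (m−1)a)`
distributed), and `Y | G = γ` is drawn from `Categorical(β)` with probability `π` and
from `Categorical(γ)` with probability `1 − π`, so that the calibration discrepancy is
`Δ = π(β − G)`.  If `β = (1/m, …, 1/m)`, then the expected calibration error with respect
to the total variation distance, `ECE = E[‖π(β − G)‖_TV]`, equals
`π · m^{−a} (1 − 1/m)^{(m−1)a} / (a · B(a, (m−1)a))`; in particular, as `m → ∞` this
closed-form expression tends to `π e^{−a} a^{a−1} / Γ(a)`. -/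
theorem ece_dirichlet_uniform_target
    {m : ℕ} (hm : 2 ≤ m) (a : ℝ) (ha : 0 < a) (pi : ℝ) (hpi0 : 0 ≤ pi) (hpi1 : pi ≤ 1)
    {Ω : Type*} [MeasurableSpace Ω] (ℙ : Measure Ω) [IsProbabilityMeasure ℙ]
    (G : Ω → stdSimplex ℝ (Fin m)) (hG : Measurable G)
    (hmarg : ∀ i : Fin m, Measure.map (fun ω => (G ω : Fin m → ℝ) i) ℙ
      = (volume.restrict (Set.Ioo (0 : ℝ) 1)).withDensity
          (fun x => ENNReal.ofReal
            (x ^ (a - 1) * (1 - x) ^ (((m : ℝ) - 1) * a - 1)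
              / betaFun a (((m : ℝ) - 1) * a)))) :
    (∫ ω, (1 / 2) * ∑ i, |pi * (1 / (m : ℝ) - (G ω : Fin m → ℝ) i)| ∂ℙ)
        = pi * (m : ℝ) ^ (-a) * (1 - 1 / (m : ℝ)) ^ (((m : ℝ) - 1) * a)
            / (a * betaFun a (((m : ℝ) - 1) * a))
      ∧ Tendsto (fun M : ℕ =>
            pi * (M : ℝ) ^ (-a) * (1 - 1 / (M : ℝ)) ^ (((M : ℝ) - 1) * a)
              / (a * betaFun a (((M : ℝ) - 1) * a)))
          atTop (𝓝 (pi * Real.exp (-a) * a ^ (a - 1) / Real.Gamma a)) :=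
  ece_dirichlet_uniform_target_general hm a ha pi hpi0 ℙ G hG hmarg
end
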